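/- Let u ∈ C⁴([0,1/2]) satisfy the elastica equation (1/√(1+u'²)) · d/dx( κ_u'/√(1+u'²) ) + (1/2)κ_u³ = 0 on (0,1/2), where κ_u = u''/(1+u'²)^{3/2}, together with the boundary conditions u(0) = 0, u''(0) = 0, u(1/2) > 0 and u'(1/2) = 0. Then u''(1/2) < 0 and u''(x) ≤ 0 for all x ∈ [0,1/2]; in particular u is concave on [0,1/2]. -/

import Mathlib

open Real MeasureTheory

/-- The curvature of the graph `(x, u x)`. -/
noncomputable def curv (u : ℝ → ℝ) (x : ℝ) : ℝ :=
  iteratedDeriv 2 u x / (1 + deriv u x ^ 2) ^ ((3:ℝ)/2)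

/-- `u` satisfies the elastica equation
`(1/√(1+u'²)) (κ_u'/√(1+u'²))' + κ_u³/2 = 0` on the set `E`. -/
def ElasticaOn (u : ℝ → ℝ) (E : Set ℝ) : Prop :=
  ∀ x ∈ E,
    (1 / Real.sqrt (1 + deriv u x ^ 2)) *
        deriv (fun y => deriv (curv u) y / Real.sqrt (1 + deriv u y ^ 2)) x
      + (1/2) * curv u x ^ 3 = 0


/-!
The elastica equation is the Euler–Lagrange equation of a translation-invariant energy, so the
force vector `(forceX u, forceY u)` is constant on `[0, 1/2]`. With `(c, d)` its value at `0`, this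
gives the first integral `c + d u' = κ² √(1 + u'²)`. As `κ(0) = 0`, the slope `u'` takes the same
value at every zero of `κ` as at `0`. Moreover `d ≠ 0`, since otherwise `κ ≡ 0`, whereas
`u(0) < u(1/2)` and `u'(1/2) = 0` force `κ < 0` somewhere; hence `κ'(0) = d (1 + u'(0)²) / 2 ≠ 0`.
Rolle's theorem for `u'` then excludes zeros of `κ` in `(0, 1/2]`, so `κ < 0` there.
-/

open Set

noncomputable def lineElement (u : ℝ → ℝ) (x : ℝ) : ℝ := √(1 + deriv u x ^ 2)

/-- `κ_s`, the derivative of the curvature with respect to arclength, `ds = lineElement u x dx`. -/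
noncomputable def curvArcDeriv (u : ℝ → ℝ) (x : ℝ) : ℝ := deriv (curv u) x / lineElement u x

theorem constant_of_hasDerivAt_zero_Ioo {f : ℝ → ℝ} {a b : ℝ} (hf : ContinuousOn f (Icc a b))
    (hf' : ∀ x ∈ Ioo a b, HasDerivAt f 0 x) : ∀ x ∈ Icc a b, f x = f a := by
  rintro x ⟨hax, hxb⟩
  rcases hax.eq_or_lt with rfl | hax
  · rfl
  obtain ⟨c, -, hc⟩ := exists_hasDerivAt_eq_slope f (fun _ => 0) hax
    (hf.mono (Icc_subset_Icc_right hxb)) fun y hy => hf' y ⟨hy.1, hy.2.trans_le hxb⟩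
  rw [eq_comm, div_eq_zero_iff, sub_eq_zero] at hc
  exact hc.resolve_right (sub_ne_zero.2 hax.ne')

theorem IsPreconnected.forall_neg_of_ne_zero {α : Type*} [TopologicalSpace α] {s : Set α}
    (hs : IsPreconnected s) {f : α → ℝ} (hf : ContinuousOn f s) (hne : ∀ x ∈ s, f x ≠ 0)
    {p : α} (hp : p ∈ s) (hfp : f p < 0) : ∀ x ∈ s, f x < 0 := by
  intro x hx
  by_contra! h
  obtain ⟨z, hz, hz0⟩ := hs.intermediate_value hp hx hf ⟨hfp.le, h⟩
  exact hne z hz hz0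

section Curvature

variable {u : ℝ → ℝ} {x : ℝ}

theorem lineElement_pos : 0 < lineElement u x := by
  unfold lineElement; positivity

theorem lineElement_sq : lineElement u x ^ 2 = 1 + deriv u x ^ 2 :=
  Real.sq_sqrt (by positivity)

theorem iteratedDeriv_two_eq_curv_mul :
    iteratedDeriv 2 u x = curv u x * lineElement u x ^ 3 := by
  rw [curv, lineElement, rpow_div_two_eq_sqrt _ (by positivity), rpow_ofNat]
  field_simp

theorem deriv_deriv_eq_curv_mul : deriv (deriv u) x = curv u x * lineElement u x ^ 3 := by
  rw [← iteratedDeriv_two_eq_curv_mul, iteratedDeriv_eq_iterate]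
  rfl

variable {n : WithTop ℕ∞}

theorem contDiff_lineElement (hu : ContDiff ℝ (n + 1) u) : ContDiff ℝ n (lineElement u) :=
  (contDiff_const.add (hu.deriv'.pow 2)).sqrt fun _ => by positivity

theorem contDiff_curv (hu : ContDiff ℝ (n + 2) u) : ContDiff ℝ n (curv u) := by
  have hu' : ContDiff ℝ (n + 1 + 1) u := by rwa [add_assoc, one_add_one_eq_two]
  have hcurv : curv u = fun x => deriv (deriv u) x / lineElement u x ^ 3 := by
    funext x
    rw [deriv_deriv_eq_curv_mul, mul_div_cancel_right₀ _ (pow_pos lineElement_pos 3).ne']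
  rw [hcurv]
  exact hu'.deriv'.deriv'.div ((contDiff_lineElement (hu'.of_le le_self_add)).pow 3)
    fun _ => (pow_pos lineElement_pos 3).ne'

theorem contDiff_curvArcDeriv (hu : ContDiff ℝ (n + 3) u) : ContDiff ℝ n (curvArcDeriv u) := by
  have hu' : ContDiff ℝ (n + 1 + 2) u := by
    rwa [add_assoc, show (1 : WithTop ℕ∞) + 2 = 3 by norm_num]
  exact (contDiff_curv hu').deriv'.div (contDiff_lineElement (hu'.of_le le_self_add))
    fun _ => lineElement_pos.ne'

theorem hasDerivAt_deriv_of_contDiff (hu : ContDiff ℝ 2 u) (x : ℝ) :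
    HasDerivAt (deriv u) (curv u x * lineElement u x ^ 3) x :=
  deriv_deriv_eq_curv_mul (u := u) ▸ (hu.differentiable_deriv_two x).hasDerivAt

theorem hasDerivAt_lineElement (hu : ContDiff ℝ 2 u) (x : ℝ) :
    HasDerivAt (lineElement u) (deriv u x * curv u x * lineElement u x ^ 2) x := by
  have h : HasDerivAt (lineElement u) _ x :=
    (((hasDerivAt_deriv_of_contDiff hu x).fun_pow 2).const_add 1).sqrt (by positivity)
  convert h using 1
  rw [← lineElement, eq_div_iff (by simpa using lineElement_pos.ne')]
  push_cast
  ring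

theorem hasDerivAt_curv (hu : ContDiff ℝ 3 u) (x : ℝ) :
    HasDerivAt (curv u) (curvArcDeriv u x * lineElement u x) x := by
  rw [curvArcDeriv, div_mul_cancel₀ _ lineElement_pos.ne']
  exact ((contDiff_curv (n := 1) hu).differentiable one_ne_zero x).hasDerivAt

end Curvature

/-- With `cos θ = 1 / lineElement u` and `sin θ = u' / lineElement u` for the tangent angle `θ`,
`(forceX u, forceY u) = κ² (cos θ, sin θ) + 2 κ_s (-sin θ, cos θ)` is the force vector of the
elastica, the Noether quantity of its translation invariance. -/
noncomputable def forceX (u : ℝ → ℝ) (x : ℝ) : ℝ :=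
  (curv u x ^ 2 - 2 * curvArcDeriv u x * deriv u x) / lineElement u x

noncomputable def forceY (u : ℝ → ℝ) (x : ℝ) : ℝ :=
  (2 * curvArcDeriv u x + curv u x ^ 2 * deriv u x) / lineElement u x

section Elastica

variable {u : ℝ → ℝ} {E : Set ℝ} {x : ℝ}

theorem forceX_add_forceY_mul :
    forceX u x + forceY u x * deriv u x = curv u x ^ 2 * lineElement u x := by
  have hL := lineElement_sq (u := u) (x := x)
  rw [forceX, forceY, div_mul_eq_mul_div, ← add_div, div_eq_iff lineElement_pos.ne']
  linear_combination (-curv u x ^ 2) * hL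

theorem forceY_of_curv_eq_zero (h : curv u x = 0) :
    forceY u x = 2 * deriv (curv u) x / lineElement u x ^ 2 := by
  rw [forceY, curvArcDeriv, h]
  ring

theorem continuous_forceX (hu : ContDiff ℝ 3 u) : Continuous (forceX u) :=
  ((((contDiff_curv (n := 1) hu).continuous.pow 2).sub
    ((continuous_const.mul (contDiff_curvArcDeriv (n := 0) hu).continuous).mul
      (hu.continuous_deriv (by norm_num)))).div
    (contDiff_lineElement (n := 2) hu).continuous fun _ => lineElement_pos.ne')

theorem continuous_forceY (hu : ContDiff ℝ 3 u) : Continuous (forceY u) :=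
  (((continuous_const.mul (contDiff_curvArcDeriv (n := 0) hu).continuous).add
    (((contDiff_curv (n := 1) hu).continuous.pow 2).mul
      (hu.continuous_deriv (by norm_num)))).div
    (contDiff_lineElement (n := 2) hu).continuous fun _ => lineElement_pos.ne')

theorem ElasticaOn.hasDerivAt_curvArcDeriv (hu : ContDiff ℝ 4 u) (heq : ElasticaOn u E)
    (hx : x ∈ E) :
    HasDerivAt (curvArcDeriv u) (-(curv u x ^ 3) / 2 * lineElement u x) x := by
  have h := heq x hx
  change 1 / lineElement u x * deriv (curvArcDeriv u) x + 1 / 2 * curv u x ^ 3 = 0 at h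
  have hL := lineElement_pos (u := u) (x := x)
  have hD : deriv (curvArcDeriv u) x = -(curv u x ^ 3) / 2 * lineElement u x := by
    field_simp at h
    linear_combination (1 / 2 : ℝ) * h
  exact hD ▸ ((contDiff_curvArcDeriv (n := 1) hu).differentiable one_ne_zero x).hasDerivAt

theorem ElasticaOn.hasDerivAt_forceX (hu : ContDiff ℝ 4 u) (heq : ElasticaOn u E) (hx : x ∈ E) :
    HasDerivAt (forceX u) 0 x := by
  have hu2 : ContDiff ℝ 2 u := hu.of_le (by norm_num)
  have hκ := hasDerivAt_curv (hu.of_le (by norm_num)) x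
  have hκs := heq.hasDerivAt_curvArcDeriv hu hx
  have hv := hasDerivAt_deriv_of_contDiff hu2 x
  have h : HasDerivAt (forceX u) _ x := ((hκ.fun_pow 2).sub ((hκs.const_mul 2).mul hv)).div
    (hasDerivAt_lineElement hu2 x) lineElement_pos.ne'
  convert h using 1
  have hL := lineElement_sq (u := u) (x := x)
  rw [eq_comm, div_eq_zero_iff]
  left
  simp only [Pi.sub_apply, Pi.mul_apply, Nat.cast_ofNat]
  linear_combination (-2 * curv u x * curvArcDeriv u x * lineElement u x ^ 2) * hL

theorem ElasticaOn.hasDerivAt_forceY (hu : ContDiff ℝ 4 u) (heq : ElasticaOn u E) (hx : x ∈ E) :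
    HasDerivAt (forceY u) 0 x := by
  have hu2 : ContDiff ℝ 2 u := hu.of_le (by norm_num)
  have hκ := hasDerivAt_curv (hu.of_le (by norm_num)) x
  have hκs := heq.hasDerivAt_curvArcDeriv hu hx
  have hv := hasDerivAt_deriv_of_contDiff hu2 x
  have h : HasDerivAt (forceY u) _ x := ((hκs.const_mul 2).add ((hκ.fun_pow 2).mul hv)).div
    (hasDerivAt_lineElement hu2 x) lineElement_pos.ne'
  convert h using 1
  have hL := lineElement_sq (u := u) (x := x)
  rw [eq_comm, div_eq_zero_iff]
  left
  simp only [Pi.add_apply, Pi.mul_apply, Nat.cast_ofNat]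
  linear_combination curv u x ^ 3 * lineElement u x ^ 2 * hL

end Elastica

section Sign

variable {u : ℝ → ℝ} {a b : ℝ}

theorem ElasticaOn.first_integral (hu : ContDiff ℝ 4 u) (heq : ElasticaOn u (Ioo a b))
    {x : ℝ} (hx : x ∈ Icc a b) :
    forceX u a + forceY u a * deriv u x = curv u x ^ 2 * lineElement u x := by
  have hu3 : ContDiff ℝ 3 u := hu.of_le (by norm_num)
  rw [← constant_of_hasDerivAt_zero_Ioo (continuous_forceX hu3).continuousOn
      (fun y hy => heq.hasDerivAt_forceX hu hy) x hx,
    ← constant_of_hasDerivAt_zero_Ioo (continuous_forceY hu3).continuousOn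
      (fun y hy => heq.hasDerivAt_forceY hu hy) x hx,
    forceX_add_forceY_mul]

theorem exists_curv_neg (hu : ContDiff ℝ 2 u) (hab : a < b) (hlt : u a < u b)
    (hb : deriv u b = 0) : ∃ η ∈ Ioo a b, curv u η < 0 := by
  obtain ⟨ξ, hξ, hvξ⟩ := exists_hasDerivAt_eq_slope u (deriv u) hab hu.continuous.continuousOn
    fun x _ => (hu.differentiable two_ne_zero x).hasDerivAt
  have hvξ_pos : 0 < deriv u ξ := hvξ ▸ div_pos (sub_pos.2 hlt) (sub_pos.2 hab)
  obtain ⟨η, hη, hvη⟩ := exists_hasDerivAt_eq_slope (deriv u) _ hξ.2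
    (hu.continuous_deriv one_le_two).continuousOn fun x _ => hasDerivAt_deriv_of_contDiff hu x
  refine ⟨η, ⟨hξ.1.trans hη.1, hη.2⟩,
    neg_of_mul_neg_left ?_ (pow_pos (lineElement_pos (u := u) (x := η)) 3).le⟩
  rw [hvη, hb, zero_sub]
  exact div_neg_of_neg_of_pos (neg_neg_of_pos hvξ_pos) (sub_pos.2 hξ.2)

/-- A zero of `κ` in `(a, b]` would give a first one `m`, since `κ'(a) ≠ 0` keeps the zeros away
from `a`; Rolle's theorem for `u'`, which takes the same value at `a` and `m`, then gives a zero of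
`κ = u'' / (1 + u'²)^(3/2)` in `(a, m)`. -/
theorem curv_ne_zero_of_zero_imp_deriv_eq (hu : ContDiff ℝ 3 u)
    (hκ'a : deriv (curv u) a ≠ 0)
    (hlevel : ∀ x ∈ Icc a b, curv u x = 0 → deriv u x = deriv u a) :
    ∀ x ∈ Ioc a b, curv u x ≠ 0 := by
  have hκ : ContDiff ℝ 1 (curv u) := contDiff_curv hu
  obtain ⟨δ, hδ, hne⟩ : ∃ δ > a, ∀ y ∈ Ioo a δ, curv u y ≠ 0 := by
    have h := ((hκ.differentiable one_ne_zero a).hasDerivAt.eventually_ne (c := 0) hκ'a)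
    obtain ⟨δ, hδ, hsub⟩ := mem_nhdsGT_iff_exists_Ioo_subset.1 (h.filter_mono (nhdsGT_le_nhdsNE a))
    exact ⟨δ, hδ, hsub⟩
  intro x hx hκx
  have hδ_le : ∀ y, a < y → curv u y = 0 → δ ≤ y := fun y hy hκy =>
    not_lt.1 fun h => hne y ⟨hy, h⟩ hκy
  obtain ⟨m, ⟨hm, hκm⟩, hmin⟩ := ((isCompact_Icc (a := δ) (b := x)).inter_right
    (isClosed_eq hκ.continuous continuous_const)).exists_isLeast
    ⟨x, ⟨hδ_le x hx.1 hκx, le_rfl⟩, hκx⟩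
  have ham : a < m := hδ.trans_le hm.1
  obtain ⟨y, hy, hy0⟩ := exists_hasDerivAt_eq_zero ham
    (hu.continuous_deriv (by norm_num)).continuousOn
    (hlevel m ⟨ham.le, hm.2.trans hx.2⟩ hκm).symm
    fun y _ => hasDerivAt_deriv_of_contDiff (hu.of_le (by norm_num)) y
  have hκy : curv u y = 0 := (mul_eq_zero.1 hy0).resolve_right (pow_pos lineElement_pos 3).ne'
  exact (hmin ⟨⟨hδ_le y hy.1 hκy, hy.2.le.trans hm.2⟩, hκy⟩).not_gt hy.2

theorem ElasticaOn.curv_neg (hu : ContDiff ℝ 4 u) (heq : ElasticaOn u (Ioo a b)) (hab : a < b)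
    (hκa : curv u a = 0) (hlt : u a < u b) (hb : deriv u b = 0) :
    ∀ x ∈ Ioc a b, curv u x < 0 := by
  have hu3 : ContDiff ℝ 3 u := hu.of_le (by norm_num)
  obtain ⟨η, hη, hκη⟩ := exists_curv_neg (hu.of_le (by norm_num)) hab hlt hb
  have hint := fun x (hx : x ∈ Icc a b) => heq.first_integral hu hx
  have hXa : forceX u a = -(forceY u a * deriv u a) := by
    have := hint a (left_mem_Icc.2 hab.le)
    rwa [hκa, zero_pow two_ne_zero, zero_mul, add_eq_zero_iff_eq_neg] at this
  have hYa : forceY u a ≠ 0 := by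
    intro hY
    have := hint η (Ioo_subset_Icc_self hη)
    rw [hXa, hY, zero_mul, neg_zero, zero_mul, add_zero, eq_comm, mul_eq_zero] at this
    exact this.elim (fun h => hκη.ne (pow_eq_zero_iff two_ne_zero |>.1 h)) lineElement_pos.ne'
  have hκ'a : deriv (curv u) a ≠ 0 := fun h => hYa (by
    rw [forceY_of_curv_eq_zero hκa, h, mul_zero, zero_div])
  have hlevel : ∀ x ∈ Icc a b, curv u x = 0 → deriv u x = deriv u a := fun x hx hκx => by
    have := hint x hx
    rw [hκx, hXa, zero_pow two_ne_zero, zero_mul, neg_add_eq_zero] at this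
    exact (mul_left_cancel₀ hYa this).symm
  exact isPreconnected_Ioc.forall_neg_of_ne_zero
    (contDiff_curv (n := 1) hu3).continuous.continuousOn
    (curv_ne_zero_of_zero_imp_deriv_eq hu3 hκ'a hlevel) (Ioo_subset_Ioc_self hη) hκη

end Sign

/-- If `u ∈ C⁴` solves the elastica equation on `(0,1/2)` with `u(0) = 0`, `u''(0) = 0`,
`u(1/2) > 0` and `u'(1/2) = 0`, then `u''(1/2) < 0`, `u'' ≤ 0` on `[0,1/2]`, and `u` is
concave on `[0,1/2]`. -/
theorem stmt_7 (u : ℝ → ℝ) (hu : ContDiff ℝ 4 u)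
    (heq : ElasticaOn u (Set.Ioo 0 (1/2)))
    (h0 : u 0 = 0) (h2 : iteratedDeriv 2 u 0 = 0)
    (hpos : 0 < u (1/2)) (h1 : deriv u (1/2) = 0) :
    iteratedDeriv 2 u (1/2) < 0 ∧
    (∀ x ∈ Set.Icc (0:ℝ) (1/2), iteratedDeriv 2 u x ≤ 0) ∧
    ConcaveOn ℝ (Set.Icc (0:ℝ) (1/2)) u := by
  have hneg := heq.curv_neg hu (by norm_num) (by rw [curv, h2, zero_div]) (by rwa [h0]) h1
  have hL : ∀ x, 0 < lineElement u x ^ 3 := fun _ => pow_pos lineElement_pos 3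
  have hu'' : ∀ x ∈ Icc (0:ℝ) (1/2), iteratedDeriv 2 u x ≤ 0 := by
    rintro x ⟨hx0, hx⟩
    rcases hx0.eq_or_lt with rfl | hx0
    · exact h2.le
    rw [iteratedDeriv_two_eq_curv_mul]
    exact mul_nonpos_of_nonpos_of_nonneg (hneg x ⟨hx0, hx⟩).le (hL x).le
  refine ⟨?_, hu'', ?_⟩
  · rw [iteratedDeriv_two_eq_curv_mul]
    exact mul_neg_of_neg_of_pos (hneg _ (right_mem_Ioc.2 (by norm_num))) (hL _)
  · refine concaveOn_of_deriv2_nonpos' (convex_Icc _ _)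
      (hu.differentiable (by norm_num)).differentiableOn
      (hu.of_le (by norm_num) |>.differentiable_deriv_two).differentiableOn fun x hx => ?_
    rw [← iteratedDeriv_eq_iterate]
    exact hu'' x hx
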